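/- For ν ∈ {0,1} and N+ν a positive integer, Σ_{k=−N}^{N+ν} q^{2k²−k} [2N+ν choose N+k]_{q²} = (−q;q)_{2N+ν}. -/

import Mathlib

/-
Write `S_m` for the left-hand side with `m = 2N + ν`, evaluated at an arbitrary `q`. For `m` even
expand `[m+1, N+k]` (in base `q²`) by `[m+1, r] = q^{2(m+1-r)} [m, r-1] + [m, r]`, for `m` odd
by `[m+1, r] = [m, r-1] + q^{2r} [m, r]`. One of the two resulting sums is `S_m` (the extra boundary
term vanishes); the other becomes `q^{m+1} S_m` under the reflection `k ↦ 1 - k` resp. `k ↦ -k`,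
by the symmetry `[m, r] = [m, m-r]` and because the weight `2k² - k` is shifted by exactly `m + 1`.
Hence `S_{m+1} = (1 + q^{m+1}) S_m`. The symmetry, and so the second Pascal rule, comes from
`[r+s, r] (q;q)_r (q;q)_s = (q;q)_{r+s}`.
-/

def IsDistinctPartition (π : List ℕ) : Prop :=
  π.Chain' (· > ·) ∧ ∀ p ∈ π, 0 < p

def IsPartition (π : List ℕ) : Prop :=
  π.Chain' (· ≥ ·) ∧ ∀ p ∈ π, 0 < p

def oddIdxOdd (π : List ℕ) : ℕ :=
  (π.zipIdx.filter fun p => p.2 % 2 == 0 && p.1 % 2 == 1).length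

def evenIdxOdd (π : List ℕ) : ℕ :=
  (π.zipIdx.filter fun p => p.2 % 2 == 1 && p.1 % 2 == 1).length

def bgRank (π : List ℕ) : ℤ := (oddIdxOdd π : ℤ) - evenIdxOdd π

def altSum : List ℕ → ℤ
  | [] => 0
  | a :: t => (a : ℤ) - altSum t

noncomputable def gaussPoly : ℕ → ℕ → Polynomial ℚ
  | _, 0 => 1
  | 0, _ + 1 => 0
  | m + 1, r + 1 => gaussPoly m r + Polynomial.X ^ (r + 1) * gaussPoly m (r + 1)

noncomputable def gaussZ (m : ℕ) (r : ℤ) : Polynomial ℚ :=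
  if 0 ≤ r then gaussPoly m r.toNat else 0

open Polynomial Finset

noncomputable def qFactorial (n : ℕ) : ℚ[X] := ∏ i ∈ range n, (1 - X ^ (i + 1))

lemma qFactorial_succ (n : ℕ) : qFactorial (n + 1) = qFactorial n * (1 - X ^ (n + 1)) :=
  prod_range_succ _ _

lemma qFactorial_ne_zero (n : ℕ) : qFactorial n ≠ 0 :=
  prod_ne_zero_iff.mpr fun i _ h => by simpa using congrArg (eval 0) h

lemma gaussPoly_zero_right (m : ℕ) : gaussPoly m 0 = 1 := by cases m <;> rfl

lemma gaussPoly_succ_succ (m r : ℕ) :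
    gaussPoly (m + 1) (r + 1) = gaussPoly m r + X ^ (r + 1) * gaussPoly m (r + 1) := rfl

lemma gaussPoly_of_lt {m r : ℕ} (h : m < r) : gaussPoly m r = 0 := by
  induction m generalizing r with
  | zero => obtain ⟨r, rfl⟩ := Nat.exists_eq_add_one.mpr h; rfl
  | succ m ih =>
    obtain ⟨r, rfl⟩ := Nat.exists_eq_add_one.mpr (Nat.zero_lt_of_lt h)
    rw [gaussPoly_succ_succ, ih (by omega), ih (by omega), mul_zero, add_zero]

lemma gaussPoly_self (m : ℕ) : gaussPoly m m = 1 := by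
  induction m with
  | zero => rfl
  | succ m ih =>
    rw [gaussPoly_succ_succ, ih, gaussPoly_of_lt (Nat.lt_succ_self m), mul_zero, add_zero]

lemma gaussPoly_mul_qFactorial (r s : ℕ) :
    gaussPoly (r + s) r * qFactorial r * qFactorial s = qFactorial (r + s) := by
  induction r generalizing s with
  | zero => simp [gaussPoly_zero_right, qFactorial]
  | succ r ihr =>
    induction s with
    | zero => simp [gaussPoly_self, qFactorial]
    | succ s ihs =>
      have h₁ := ihr (s + 1)
      have h₂ : gaussPoly (r + (s + 1)) (r + 1) * qFactorial (r + 1) * qFactorial s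
          = qFactorial (r + (s + 1)) := by rwa [add_right_comm, add_assoc] at ihs
      rw [show r + 1 + (s + 1) = r + (s + 1) + 1 by ring, gaussPoly_succ_succ,
        qFactorial_succ (r + (s + 1))]
      linear_combination (1 - X ^ (r + 1)) * h₁ + X ^ (r + 1) * (1 - X ^ (s + 1)) * h₂
        + gaussPoly (r + (s + 1)) r * qFactorial (s + 1) * qFactorial_succ r
        + X ^ (r + 1) * gaussPoly (r + (s + 1)) (r + 1) * qFactorial (r + 1) * qFactorial_succ s

lemma gaussPoly_symm_add (r s : ℕ) : gaussPoly (r + s) r = gaussPoly (r + s) s := by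
  have h₁ := gaussPoly_mul_qFactorial r s
  have h₂ := gaussPoly_mul_qFactorial s r
  rw [add_comm s r] at h₂
  apply mul_right_cancel₀ (mul_ne_zero (qFactorial_ne_zero r) (qFactorial_ne_zero s))
  linear_combination h₁ - h₂

lemma gaussZ_of_neg (m : ℕ) {r : ℤ} (h : r < 0) : gaussZ m r = 0 := if_neg (by omega)

lemma gaussZ_of_lt {m : ℕ} {r : ℤ} (h : m < r) : gaussZ m r = 0 := by
  rw [gaussZ, if_pos (by omega), gaussPoly_of_lt (by omega)]

lemma gaussZ_succ (m : ℕ) (r : ℤ) :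
    gaussZ (m + 1) r = gaussZ m (r - 1) + X ^ r.toNat * gaussZ m r := by
  rcases lt_trichotomy r 0 with h | rfl | h
  · simp [gaussZ_of_neg, h, show r - 1 < 0 by omega]
  · simp [gaussZ, gaussPoly_zero_right]
  · obtain ⟨n, rfl⟩ : ∃ n : ℕ, r = n + 1 := ⟨r.toNat - 1, by omega⟩
    simp [gaussZ, gaussPoly_succ_succ, h.le]

lemma gaussZ_symm (m : ℕ) (r : ℤ) : gaussZ m (m - r) = gaussZ m r := by
  rcases lt_or_ge r 0 with h | h₀
  · rw [gaussZ_of_neg m h, gaussZ_of_lt (by omega)]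
  rcases lt_or_ge (m : ℤ) r with h | h₁
  · rw [gaussZ_of_lt h, gaussZ_of_neg m (by omega)]
  obtain ⟨r, rfl⟩ := Int.eq_ofNat_of_zero_le h₀
  obtain ⟨s, rfl⟩ : ∃ s, m = r + s := ⟨m - r, by omega⟩
  simpa [gaussZ] using (gaussPoly_symm_add r s).symm

lemma gaussZ_succ' (m : ℕ) (r : ℤ) :
    gaussZ (m + 1) r = X ^ (m + 1 - r).toNat * gaussZ m (r - 1) + gaussZ m r := by
  rw [← gaussZ_symm (m + 1) r, gaussZ_succ, ← gaussZ_symm m (r - 1),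
    ← gaussZ_symm m r]
  push_cast
  rw [show (m : ℤ) + 1 - r - 1 = m - r by ring, show (m : ℤ) - (r - 1) = m + 1 - r by ring,
    add_comm]

lemma Finset.sum_Icc_reflect {M : Type*} [AddCommMonoid M] (f : ℤ → M) (a b : ℤ) :
    ∑ k ∈ Icc a b, f (a + b - k) = ∑ k ∈ Icc a b, f k :=
  sum_nbij' (a + b - ·) (a + b - ·) (by intro k; simp only [mem_Icc]; omega)
    (by intro k; simp only [mem_Icc]; omega) (by intro k _; simp) (by intro k _; simp)
    (by intro k _; simp)

lemma two_mul_sq_sub_self_nonneg (k : ℤ) : 0 ≤ 2 * k ^ 2 - k := by nlinarith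

lemma pow_toNat_mul_sq_pow_toNat {M : Type*} [Monoid M] (q : M) {a b c : ℤ} {n : ℕ}
    (ha : 0 ≤ a) (hb : 0 ≤ b) (hc : 0 ≤ c) (h : a + 2 * b = n + c) :
    q ^ a.toNat * (q ^ 2) ^ b.toNat = q ^ n * q ^ c.toNat := by
  rw [← pow_mul, ← pow_add, ← pow_add]
  congr 1
  omega

section HexSum

variable {R : Type*} [CommRing R] [Algebra ℚ R] (q : R)

noncomputable def hexSum (N ν : ℕ) : R :=
  ∑ k ∈ Icc (-(N : ℤ)) ((N : ℤ) + ν),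
    q ^ (2 * k ^ 2 - k).toNat * aeval (q ^ 2) (gaussZ (2 * N + ν) ((N : ℤ) + k))

lemma hexSum_one (N : ℕ) : hexSum q N 1 = (1 + q ^ (2 * N + 1)) * hexSum q N 0 := by
  have hext : ∑ k ∈ Icc (-(N : ℤ)) (N + 1),
      q ^ (2 * k ^ 2 - k).toNat * aeval (q ^ 2) (gaussZ (2 * N) (N + k)) =
      ∑ k ∈ Icc (-(N : ℤ)) N,
        q ^ (2 * k ^ 2 - k).toNat * aeval (q ^ 2) (gaussZ (2 * N) (N + k)) := by
    refine (sum_subset (Icc_subset_Icc_right (by omega)) fun k hk hk' => ?_).symm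
    simp only [mem_Icc] at hk hk'
    rw [gaussZ_of_lt (by omega), map_zero, mul_zero]
  have hreflect : ∑ k ∈ Icc (-(N : ℤ)) (N + 1), q ^ (2 * k ^ 2 - k).toNat *
      ((q ^ 2) ^ (((2 * N : ℕ) : ℤ) + 1 - (N + k)).toNat *
        aeval (q ^ 2) (gaussZ (2 * N) (N + k - 1))) =
      q ^ (2 * N + 1) * ∑ k ∈ Icc (-(N : ℤ)) (N + 1),
        q ^ (2 * k ^ 2 - k).toNat * aeval (q ^ 2) (gaussZ (2 * N) (N + k)) := by
    refine (sum_Icc_reflect _ _ _).symm.trans ?_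
    rw [mul_sum]
    refine sum_congr rfl fun k hk => ?_
    simp only [mem_Icc] at hk
    rw [show (N : ℤ) + (-N + (N + 1) - k) - 1 = ((2 * N : ℕ) : ℤ) - (N + k) by push_cast; ring,
      gaussZ_symm, ← mul_assoc, pow_toNat_mul_sq_pow_toNat q (n := 2 * N + 1)
        (two_mul_sq_sub_self_nonneg _) (by omega) (two_mul_sq_sub_self_nonneg k)
        (by push_cast; ring),
      mul_assoc]
  simp only [hexSum, Nat.cast_one, Nat.cast_zero, add_zero, gaussZ_succ' (2 * N), map_add, map_mul,
    map_pow, aeval_X, mul_add, sum_add_distrib]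
  rw [hreflect, hext]
  ring

lemma hexSum_succ_zero (N : ℕ) : hexSum q (N + 1) 0 = (1 + q ^ (2 * N + 2)) * hexSum q N 1 := by
  have hext : ∑ k ∈ Icc (-((N : ℤ) + 1)) (N + 1),
      q ^ (2 * k ^ 2 - k).toNat * aeval (q ^ 2) (gaussZ (2 * N + 1) (N + 1 + k - 1)) =
      ∑ k ∈ Icc (-(N : ℤ)) (N + 1),
        q ^ (2 * k ^ 2 - k).toNat * aeval (q ^ 2) (gaussZ (2 * N + 1) (N + k)) := by
    simp_rw [show ∀ k : ℤ, (N : ℤ) + 1 + k - 1 = N + k from fun k => by ring]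
    refine (sum_subset (Icc_subset_Icc_left (by omega)) fun k hk hk' => ?_).symm
    simp only [mem_Icc] at hk hk'
    rw [gaussZ_of_neg _ (by omega), map_zero, mul_zero]
  have hreflect : ∑ k ∈ Icc (-((N : ℤ) + 1)) (N + 1), q ^ (2 * k ^ 2 - k).toNat *
      ((q ^ 2) ^ ((N : ℤ) + 1 + k).toNat * aeval (q ^ 2) (gaussZ (2 * N + 1) (N + 1 + k))) =
      q ^ (2 * N + 2) * ∑ k ∈ Icc (-((N : ℤ) + 1)) (N + 1),
        q ^ (2 * k ^ 2 - k).toNat * aeval (q ^ 2) (gaussZ (2 * N + 1) (N + 1 + k - 1)) := by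
    refine (sum_Icc_reflect _ _ _).symm.trans ?_
    rw [mul_sum]
    refine sum_congr rfl fun k hk => ?_
    simp only [mem_Icc] at hk
    rw [show (N : ℤ) + 1 + (-(N + 1) + (N + 1) - k) = ((2 * N + 1 : ℕ) : ℤ) - (N + 1 + k - 1) by
        push_cast; ring,
      gaussZ_symm, ← mul_assoc, pow_toNat_mul_sq_pow_toNat q (n := 2 * N + 2)
        (two_mul_sq_sub_self_nonneg _) (by omega) (two_mul_sq_sub_self_nonneg k)
        (by push_cast; ring),
      mul_assoc]
  rw [hexSum, show 2 * (N + 1) + 0 = 2 * N + 1 + 1 by ring]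
  simp only [Nat.cast_add, Nat.cast_one, Nat.cast_zero, add_zero, gaussZ_succ (2 * N + 1), map_add,
    map_mul, map_pow, aeval_X, mul_add, sum_add_distrib]
  rw [hreflect, hext, hexSum]
  push_cast
  ring

lemma hexSum_eq_prod (N ν : ℕ) (hν : ν ≤ 1) :
    hexSum q N ν = ∏ n ∈ range (2 * N + ν), (1 + q ^ (n + 1)) := by
  have key : ∀ N : ℕ, hexSum q N 0 = ∏ n ∈ range (2 * N), (1 + q ^ (n + 1)) ∧
      hexSum q N 1 = ∏ n ∈ range (2 * N + 1), (1 + q ^ (n + 1)) := by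
    intro N
    induction N with
    | zero =>
      have h₀ : hexSum q 0 0 = 1 := by simp [hexSum, gaussZ, gaussPoly_zero_right]
      exact ⟨by simp [h₀], by rw [hexSum_one, h₀]; simp⟩
    | succ N ih =>
      have h₀ : hexSum q (N + 1) 0 = ∏ n ∈ range (2 * (N + 1)), (1 + q ^ (n + 1)) := by
        rw [hexSum_succ_zero, ih.2, show 2 * (N + 1) = 2 * N + 1 + 1 by ring,
          prod_range_succ _ (2 * N + 1)]
        ring
      exact ⟨h₀, by rw [hexSum_one, h₀, prod_range_succ _ (2 * (N + 1))]; ring⟩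
  interval_cases ν
  exacts [(key N).1, (key N).2]

end HexSum

theorem stmt10_general (N ν : ℕ) (hν : ν ≤ 1) :
    ∑ k ∈ Finset.Icc (-(N : ℤ)) ((N : ℤ) + ν),
      Polynomial.X ^ (2 * k ^ 2 - k).toNat *
        Polynomial.aeval ((Polynomial.X : Polynomial ℚ) ^ 2)
          (gaussZ (2 * N + ν) ((N : ℤ) + k)) =
    ∏ n ∈ Finset.range (2 * N + ν), (1 + Polynomial.X ^ (n + 1)) :=
  hexSum_eq_prod X N ν hν

theorem stmt10 (N ν : ℕ) (hν : ν ≤ 1) (h : 0 < N + ν) :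
    ∑ k ∈ Finset.Icc (-(N : ℤ)) ((N : ℤ) + ν),
      Polynomial.X ^ (2 * k ^ 2 - k).toNat *
        Polynomial.aeval ((Polynomial.X : Polynomial ℚ) ^ 2)
          (gaussZ (2 * N + ν) ((N : ℤ) + k)) =
    ∏ n ∈ Finset.range (2 * N + ν), (1 + Polynomial.X ^ (n + 1)) :=
  stmt10_general N ν hν
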